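/- Let d ≥ 3 be odd and let f be a degree-d pair with f ∉ I(d); then f^n is a nonzero pair for every n ≥ 1. Moreover: (i) f^n is semistable for every n ≥ 1 if and only if d_h(f^n) ≤ (d^n − 1)/2 for every n ≥ 1 and every h ∈ ℙ¹(ℂ); (ii) if for every h ∈ ℙ¹(ℂ) one has sup_{n≥1} d_h(f^n)/d^n < 1/2, then f^n is stable for every n ≥ 1. -/

import Mathlib

/-!
If the reduced map of `f` is constant with value `v`, then `f^(n+1) = K_n • v` with
`K_{n+1} = K_n ^ d · k(v)`, and `k(v) ≠ 0` because `f ∘ f ≠ 0`. Otherwise no iterate has constant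
reduced map: a nonzero homogeneous `F` with `F(g₁, g₂) = 0` makes `g₁ / g₂` a root of the
dehomogenization `F(X, 1)` in the fraction field, hence a constant since `ℂ` is algebraically
closed. So no iterate vanishes.

Depth grows under composition: `depth_v (g ∘ h) ≥ deg g · depth_v h`. For `e = d^n`, a hole of
depth `(e + 1)/2` in `f^n` therefore gives depth `≥ e (e + 1)/2 > (e² + 1)/2` in `f^(2n)`, which
is (i). For (ii), a fixed hole of depth `(e - 1)/2` writes `f^n = L^m • g'` with `g'(v) ∝ v`; this
shape is stable under composition, so `f^(nj)` has depth `≥ (e^j - 1)/2` at `v`, and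
`depth / d^(nj) → 1/2` contradicts the bound `c < 1/2`.
-/
noncomputable section

open MvPolynomial

/-- Polynomials in the two variables `z = X 0` and `w = X 1` over `ℂ`. -/
abbrev MvPoly2 : Type := MvPolynomial (Fin 2) ℂ

/-- A pair of polynomials, representing a point of `Ratbar_d` when both entries are
homogeneous of degree `d` and not both zero. -/
abbrev Pair : Type := MvPoly2 × MvPoly2

/-- `f` is a degree-`d` pair: both entries homogeneous of degree `d`, not both zero. -/
def IsDegPair (d : ℕ) (f : Pair) : Prop :=
  f.1.IsHomogeneous d ∧ f.2.IsHomogeneous d ∧ f ≠ 0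

/-- Composition of pairs: substitute the components of `g` into `f`. -/
def comp (f g : Pair) : Pair :=
  (aeval ![g.1, g.2] f.1, aeval ![g.1, g.2] f.2)

/-- The identity pair `(z, w)`. -/
def idPair : Pair := (X 0, X 1)

/-- Iterates: `iter f n = f^n`, the `n`-fold self-composition, with `f^0` the identity. -/
def iter (f : Pair) : ℕ → Pair
  | 0 => idPair
  | n + 1 => comp f (iter f n)

/-- The linear form `β z - α w` vanishing at the point `(α : β)` of `ℙ¹`. -/
def linForm (v : ℂ × ℂ) : MvPoly2 := C v.2 * X 0 - C v.1 * X 1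

/-- Order of vanishing of the linear form of `v` in a polynomial `P`. -/
def ord (v : ℂ × ℂ) (P : MvPoly2) : ℕ := sSup {n : ℕ | linForm v ^ n ∣ P}

/-- Depth of `v` as a hole of `f`: the multiplicity of `linForm v` in `gcd (f.1, f.2)`. -/
def depth (v : ℂ × ℂ) (f : Pair) : ℕ :=
  sSup {n : ℕ | linForm v ^ n ∣ f.1 ∧ linForm v ^ n ∣ f.2}

/-- The homogeneous form `z Q - w P`, whose vanishing at `v` beyond the depth of the
hole detects that the reduced map fixes `v`. -/
def fixedForm (f : Pair) : MvPoly2 := X 0 * f.2 - X 1 * f.1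

/-- `φ_f(v) = v` in the sense of the paper: the multiplicity of `v` as a root of
`z Q - w P` strictly exceeds the depth of `v` as a hole of `f`. -/
def FixedHole (v : ℂ × ℂ) (f : Pair) : Prop := depth v f < ord v (fixedForm f)

/-- Stability with cutoff `m`: all holes have depth at most `m` and no hole of depth
exactly `m` is fixed by the reduced map. -/
def StableAt (m : ℕ) (f : Pair) : Prop :=
  f ≠ 0 ∧ ∀ v : ℂ × ℂ, v ≠ 0 →
    depth v f ≤ m ∧ (0 < depth v f → depth v f = m → ¬ FixedHole v f)

/-- GIT stability of a degree-`d` pair. -/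
def Stable (d : ℕ) (f : Pair) : Prop :=
  if d % 2 = 0 then StableAt (d / 2) f else StableAt ((d - 1) / 2) f

/-- GIT semistability of a degree-`d` pair. -/
def Semistable (d : ℕ) (f : Pair) : Prop :=
  if d % 2 = 0 then StableAt (d / 2) f else StableAt ((d + 1) / 2) f

/-- The indeterminacy locus: `f ∈ I(d)` iff `f ∘ f` is the zero pair. -/
def IsIndet (f : Pair) : Prop := comp f f = 0

/-- The degree-1 pair `(az + bw, cz + dw)` associated to a `2 × 2` matrix. -/
def matPair (A : Matrix (Fin 2) (Fin 2) ℂ) : Pair :=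
  (C (A 0 0) * X 0 + C (A 0 1) * X 1, C (A 1 0) * X 0 + C (A 1 1) * X 1)

/-- Conjugacy of pairs: `g` is a nonzero scalar multiple of `A ∘ f ∘ A⁻¹` for some
`A ∈ GL₂(ℂ)`. -/
def Conjugate (f g : Pair) : Prop :=
  ∃ A : Matrix.GeneralLinearGroup (Fin 2) ℂ, ∃ c : ℂ, c ≠ 0 ∧
    g = c • comp (matPair (A : Matrix (Fin 2) (Fin 2) ℂ))
        (comp f (matPair ((A⁻¹ : Matrix.GeneralLinearGroup (Fin 2) ℂ) : Matrix (Fin 2) (Fin 2) ℂ)))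

theorem MvPolynomial.IsHomogeneous.aeval_smul {σ R S : Type*} [CommSemiring R] [CommSemiring S]
    [Algebra R S] {φ : MvPolynomial σ R} {n : ℕ} (hφ : φ.IsHomogeneous n) (c : S) (x : σ → S) :
    MvPolynomial.aeval (c • x) φ = c ^ n * MvPolynomial.aeval x φ := by
  conv_lhs => rw [φ.as_sum]
  conv_rhs => rw [φ.as_sum]
  simp only [map_sum, Finset.mul_sum, aeval_monomial]
  refine Finset.sum_congr rfl fun u hu => ?_
  simp only [Pi.smul_apply, smul_eq_mul, mul_pow, Finsupp.prod_mul]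
  rw [hφ.degree_eq_sum_deg_support hu, Finsupp.prod, Finset.prod_pow_eq_pow_sum]
  ring

lemma aeval_comp (g h : Pair) (F : MvPoly2) :
    aeval ![(comp g h).1, (comp g h).2] F = aeval ![h.1, h.2] (aeval ![g.1, g.2] F) := by
  rw [comp_aeval_apply]
  congr 2
  funext i
  fin_cases i <;> rfl

lemma comp_assoc (f g h : Pair) : comp (comp f g) h = comp f (comp g h) := by
  simp only [comp, ← aeval_comp]

lemma comp_idPair (f : Pair) : comp f idPair = f := by
  have : (![(X 0 : MvPoly2), X 1]) = X := by
    funext i; fin_cases i <;> rfl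
  simp [comp, idPair, this]

lemma idPair_comp (f : Pair) : comp idPair f = f := by
  simp [comp, idPair]

lemma iter_one (g : Pair) : iter g 1 = g := comp_idPair g

lemma iter_add (f : Pair) (a b : ℕ) : iter f (a + b) = comp (iter f a) (iter f b) := by
  induction a with
  | zero => rw [zero_add, iter, idPair_comp]
  | succ a ih => rw [Nat.succ_add, iter, iter, ih, comp_assoc]

lemma iter_mul (f : Pair) (n j : ℕ) : iter f (n * j) = iter (iter f n) j := by
  induction j with
  | zero => rfl
  | succ j ih => rw [Nat.mul_succ, add_comm, iter_add, ih, iter]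

lemma isHomogeneous_iter {d : ℕ} {f : Pair} (hf1 : f.1.IsHomogeneous d)
    (hf2 : f.2.IsHomogeneous d) (n : ℕ) :
    (iter f n).1.IsHomogeneous (d ^ n) ∧ (iter f n).2.IsHomogeneous (d ^ n) := by
  induction n with
  | zero => exact ⟨isHomogeneous_X ℂ 0, isHomogeneous_X ℂ 1⟩
  | succ n ih =>
    have hg : ∀ i, (![(iter f n).1, (iter f n).2] i).IsHomogeneous (d ^ n) := by
      intro i; fin_cases i
      exacts [ih.1, ih.2]
    rw [pow_succ]
    exact ⟨hf1.aeval _ hg, hf2.aeval _ hg⟩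

lemma linForm_ne_zero {v : ℂ × ℂ} (hv : v ≠ 0) : linForm v ≠ 0 := by
  intro h
  have h1 := congrArg (coeff (Finsupp.single 0 1)) h
  have h2 := congrArg (coeff (Finsupp.single 1 1)) h
  simp [linForm, X, coeff_monomial, Finsupp.single_eq_single_iff] at h1 h2
  exact hv (Prod.ext h2 h1)

lemma isHomogeneous_linForm (v : ℂ × ℂ) : (linForm v).IsHomogeneous 1 :=
  (isHomogeneous_C_mul_X _ _).sub (isHomogeneous_C_mul_X _ _)

lemma aeval_linForm (v : ℂ × ℂ) (a b : MvPoly2) :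
    aeval ![a, b] (linForm v) = C v.2 * a - C v.1 * b := by
  simp [linForm, algebraMap_eq]

lemma eval_eq_zero_of_linForm_dvd {v : ℂ × ℂ} {P : MvPoly2} (h : linForm v ∣ P) :
    eval ![v.1, v.2] P = 0 := by
  obtain ⟨t, rfl⟩ := h
  simp only [linForm, map_mul, map_sub, eval_C, eval_X]
  simp [mul_comm]

lemma prime_linForm {v : ℂ × ℂ} (hv : v ≠ 0) : Prime (linForm v) := by
  refine (irreducible_of_totalDegree_eq_one
    ((isHomogeneous_linForm v).totalDegree (linForm_ne_zero hv)) fun x hx => ?_).prime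
  refine isUnit_iff_ne_zero.mpr fun hx0 => hv ?_
  have h0 := hx (Finsupp.single 0 1)
  have h1 := hx (Finsupp.single 1 1)
  simp [hx0, linForm, X, coeff_monomial, Finsupp.single_eq_single_iff] at h0 h1
  exact Prod.ext h1 h0

lemma linForm_dvd_of_dvd_X_mul {v : ℂ × ℂ} (hv : v ≠ 0) {s : MvPoly2}
    (h0 : linForm v ∣ X 0 * s) (h1 : linForm v ∣ X 1 * s) : linForm v ∣ s := by
  rcases (prime_linForm hv).dvd_or_dvd h0 with hX0 | hs
  · rcases (prime_linForm hv).dvd_or_dvd h1 with hX1 | hs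
    · have e0 := eval_eq_zero_of_linForm_dvd hX0
      have e1 := eval_eq_zero_of_linForm_dvd hX1
      simp only [eval_X] at e0 e1
      exact absurd (Prod.ext e0 e1) hv
    · exact hs
  · exact hs

theorem MvPolynomial.IsHomogeneous.eq_algebraMap_mul_of_aeval_eq_zero {k K : Type*} [Field k]
    [IsAlgClosed k] [Field K] [Algebra k K] {F : MvPolynomial (Fin 2) k} {m : ℕ}
    (hF : F.IsHomogeneous m) (hF0 : F ≠ 0) {a b : K} (h : MvPolynomial.aeval ![a, b] F = 0) :
    b = 0 ∨ ∃ r : k, a = algebraMap k K r * b := by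
  refine or_iff_not_imp_left.mpr fun hb => ?_
  set p : Polynomial k := MvPolynomial.aeval ![Polynomial.X, 1] F
  have hp : p ≠ 0 := by
    intro hp0
    have hFp := Polynomial.homogenize_eq_of_isHomogeneous hF (p := p) rfl
    rw [hp0, Polynomial.homogenize_zero] at hFp
    exact hF0 hFp.symm
  have hroot : Polynomial.aeval (a / b) p = 0 := by
    have hab : ![a, b] = b • ![a / b, 1] := by simp [mul_div_cancel₀, hb]
    rw [hab, hF.aeval_smul, mul_eq_zero] at h
    rw [comp_aeval_apply]
    convert h.resolve_left (pow_ne_zero _ hb) using 3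
    funext i; fin_cases i <;> simp
  have hint : IsIntegral k (a / b) := IsAlgebraic.isIntegral ⟨p, hp, hroot⟩
  obtain ⟨r, hr⟩ := minpoly.mem_range_of_degree_eq_one k (a / b)
    (IsAlgClosed.degree_eq_one_of_irreducible k (minpoly.irreducible hint))
  exact ⟨r, by rw [hr, div_mul_cancel₀ _ hb]⟩

def IsConstPair (g : Pair) : Prop :=
  ∃ v : ℂ × ℂ, v ≠ 0 ∧ ∃ k : MvPoly2, g = (C v.1 * k, C v.2 * k)

lemma isConstPair_of_aeval_eq_zero {F : MvPoly2} {m : ℕ} (hF : F.IsHomogeneous m) (hF0 : F ≠ 0)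
    {g : Pair} (h : aeval ![g.1, g.2] F = 0) : IsConstPair g := by
  set toFrac := algebraMap MvPoly2 (FractionRing MvPoly2)
  have hinj : Function.Injective toFrac := IsFractionRing.injective _ _
  have h' : aeval ![toFrac g.1, toFrac g.2] F = 0 := by
    rw [show ![toFrac g.1, toFrac g.2] = toFrac ∘ ![g.1, g.2] by funext i; fin_cases i <;> rfl,
      aeval_algebraMap_apply, h, map_zero]
  rcases hF.eq_algebraMap_mul_of_aeval_eq_zero hF0 h' with hb | ⟨r, hr⟩
  · rw [map_eq_zero_iff _ hinj] at hb
    exact ⟨(1, 0), by simp, g.1, Prod.ext (by simp) (by simp [hb])⟩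
  · rw [IsScalarTower.algebraMap_apply ℂ MvPoly2, ← map_mul, hinj.eq_iff] at hr
    exact ⟨(r, 1), by simp, g.2, Prod.ext (by simpa [algebraMap_eq] using hr) (by simp)⟩

lemma not_isConstPair_idPair : ¬ IsConstPair idPair := by
  rintro ⟨v, hv, k, hk⟩
  apply linForm_ne_zero hv
  rw [linForm, show X 0 = C v.1 * k from congrArg Prod.fst hk,
    show X 1 = C v.2 * k from congrArg Prod.snd hk]
  ring

lemma ne_zero_of_not_isConstPair {g : Pair} (hg : ¬ IsConstPair g) : g ≠ 0 :=
  fun h => hg (h ▸ ⟨(1, 0), by simp, 0, by ext <;> simp⟩)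

lemma not_isConstPair_comp {d : ℕ} {f g : Pair} (hf1 : f.1.IsHomogeneous d)
    (hf2 : f.2.IsHomogeneous d) (hf : ¬ IsConstPair f) (hg : ¬ IsConstPair g) :
    ¬ IsConstPair (comp f g) := by
  rintro ⟨v, hv, k, hk⟩
  set G := aeval ![f.1, f.2] (linForm v)
  have hG : G.IsHomogeneous (d * 1) := (isHomogeneous_linForm v).aeval _ fun i => by
    fin_cases i
    exacts [hf1, hf2]
  have hG0 : G ≠ 0 := fun h => hf (isConstPair_of_aeval_eq_zero (isHomogeneous_linForm v)
    (linForm_ne_zero hv) h)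
  refine hg (isConstPair_of_aeval_eq_zero hG hG0 ?_)
  rw [← aeval_comp, hk, aeval_linForm]
  ring

lemma not_isConstPair_iter {d : ℕ} {f : Pair} (hf1 : f.1.IsHomogeneous d)
    (hf2 : f.2.IsHomogeneous d) (hf : ¬ IsConstPair f) (n : ℕ) : ¬ IsConstPair (iter f n) := by
  induction n with
  | zero => exact not_isConstPair_idPair
  | succ n ih => exact not_isConstPair_comp hf1 hf2 hf ih

lemma aeval_C_mul_pair {G : MvPoly2} {e : ℕ} (hG : G.IsHomogeneous e) (v : ℂ × ℂ)
    (K : MvPoly2) : aeval ![C v.1 * K, C v.2 * K] G = K ^ e * C (eval ![v.1, v.2] G) := by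
  rw [show ![C v.1 * K, C v.2 * K] = K • (C ∘ ![v.1, v.2]) by
      funext i; fin_cases i <;> simp [mul_comm],
    hG.aeval_smul, aeval_C_comp_left]
  rfl

lemma iter_ne_zero_of_isConstPair {d : ℕ} {f : Pair} (hf1 : f.1.IsHomogeneous d)
    (hf2 : f.2.IsHomogeneous d) (hf : IsConstPair f) (hff : comp f f ≠ 0) (n : ℕ) :
    iter f n ≠ 0 := by
  obtain ⟨v, hv, k, rfl⟩ := hf
  obtain ⟨w, hw_def⟩ : ∃ w, eval ![v.1, v.2] k = w := ⟨_, rfl⟩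
  have hcomp : ∀ K, comp (C v.1 * k, C v.2 * k) (C v.1 * K, C v.2 * K)
      = (C v.1 * (K ^ d * C w), C v.2 * (K ^ d * C w)) := by
    intro K
    simp only [comp, aeval_C_mul_pair hf1, aeval_C_mul_pair hf2, map_mul, eval_C, hw_def]
    ext1 <;> simp only <;> ring
  have hw : w ≠ 0 := by
    intro hw
    apply hff
    rw [hcomp, hw]
    ext <;> simp
  have hiter : ∀ n, ∃ K ≠ 0, iter (C v.1 * k, C v.2 * k) (n + 1) = (C v.1 * K, C v.2 * K) := by
    intro n
    induction n with
    | zero => exact ⟨k, fun hk => hff (by simp [comp, hk]), comp_idPair _⟩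
    | succ n ih =>
      obtain ⟨K, hK, hKn⟩ := ih
      refine ⟨K ^ d * C w, mul_ne_zero (pow_ne_zero _ hK) (C_ne_zero.mpr hw), ?_⟩
      rw [iter, hKn, hcomp]
  cases n with
  | zero => exact ne_zero_of_not_isConstPair not_isConstPair_idPair
  | succ n =>
    obtain ⟨K, hK, hKn⟩ := hiter n
    rw [hKn]
    intro h0
    have h1 : C v.1 * K = 0 := congrArg Prod.fst h0
    have h2 : C v.2 * K = 0 := congrArg Prod.snd h0
    simp only [mul_eq_zero, hK, or_false, C_eq_zero] at h1 h2
    exact hv (Prod.ext h1 h2)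

lemma iter_ne_zero {d : ℕ} {f : Pair} (hf1 : f.1.IsHomogeneous d) (hf2 : f.2.IsHomogeneous d)
    (hff : comp f f ≠ 0) (n : ℕ) : iter f n ≠ 0 := by
  by_cases hf : IsConstPair f
  · exact iter_ne_zero_of_isConstPair hf1 hf2 hf hff n
  · exact ne_zero_of_not_isConstPair (not_isConstPair_iter hf1 hf2 hf n)

lemma bddAbove_depth {v : ℂ × ℂ} (hv : v ≠ 0) {g : Pair} (hg : g ≠ 0) :
    BddAbove {n : ℕ | linForm v ^ n ∣ g.1 ∧ linForm v ^ n ∣ g.2} := by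
  have hfin {F : MvPoly2} (hF : F ≠ 0) := FiniteMultiplicity.of_prime_left (prime_linForm hv) hF
  by_cases h1 : g.1 = 0
  · have h2 : g.2 ≠ 0 := fun h2 => hg (Prod.ext h1 h2)
    exact ⟨_, fun n hn => (hfin h2).pow_dvd_iff_le_multiplicity.mp hn.2⟩
  · exact ⟨_, fun n hn => (hfin h1).pow_dvd_iff_le_multiplicity.mp hn.1⟩

lemma pow_depth_dvd {v : ℂ × ℂ} (hv : v ≠ 0) {g : Pair} (hg : g ≠ 0) :
    linForm v ^ depth v g ∣ g.1 ∧ linForm v ^ depth v g ∣ g.2 :=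
  Nat.sSup_mem ⟨0, by simp⟩ (bddAbove_depth hv hg)

lemma le_depth_of_pow_dvd {v : ℂ × ℂ} (hv : v ≠ 0) {g : Pair} (hg : g ≠ 0) {k : ℕ}
    (h1 : linForm v ^ k ∣ g.1) (h2 : linForm v ^ k ∣ g.2) : k ≤ depth v g :=
  le_csSup (bddAbove_depth hv hg) ⟨h1, h2⟩

lemma pow_succ_dvd_of_lt_ord {v : ℂ × ℂ} {P : MvPoly2} {m : ℕ} (h : m < ord v P) :
    linForm v ^ (m + 1) ∣ P := by
  by_contra hP
  refine (csSup_le' fun n hn => ?_ : ord v P ≤ m).not_gt h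
  by_contra! hmn
  exact hP ((pow_dvd_pow _ hmn).trans hn)

lemma mul_depth_le_depth_comp {v : ℂ × ℂ} (hv : v ≠ 0) {e : ℕ} {g h : Pair}
    (hg1 : g.1.IsHomogeneous e) (hg2 : g.2.IsHomogeneous e) (hh : h ≠ 0)
    (hgh : comp g h ≠ 0) : e * depth v h ≤ depth v (comp g h) := by
  obtain ⟨⟨a, ha⟩, ⟨b, hb⟩⟩ := pow_depth_dvd hv hh
  have hsubst : ∀ P : MvPoly2, P.IsHomogeneous e →
      linForm v ^ (e * depth v h) ∣ aeval ![h.1, h.2] P := fun P hP => by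
    rw [ha, hb, show ![_ * a, _ * b] = linForm v ^ depth v h • ![a, b] by simp,
      hP.aeval_smul, ← pow_mul, mul_comm e]
    exact dvd_mul_right _ _
  exact le_depth_of_pow_dvd hv hgh (hsubst _ hg1) (hsubst _ hg2)

/-- `g = L ^ m • g'` for the linear form `L` of `v`, where the pair `g'` sends `v` to a multiple
of `v` (possibly `0`). -/
def FixesHole (v : ℂ × ℂ) (m : ℕ) (g : Pair) : Prop :=
  ∃ p q : MvPoly2, g = (linForm v ^ m * p, linForm v ^ m * q) ∧
    linForm v ∣ aeval ![p, q] (linForm v)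

lemma fixesHole_idPair (v : ℂ × ℂ) : FixesHole v 0 idPair :=
  ⟨X 0, X 1, by simp [idPair], by simp [linForm]⟩

lemma FixesHole.comp {v : ℂ × ℂ} {e m k : ℕ} {g h : Pair} (hg1 : g.1.IsHomogeneous e)
    (hg2 : g.2.IsHomogeneous e) (hg : FixesHole v m g) (hh : FixesHole v k h) :
    FixesHole v (e * k + m) (comp g h) := by
  obtain ⟨p, q, rfl, hpq⟩ := hg
  obtain ⟨a, b, rfl, t, hab⟩ := hh
  set L := linForm v
  have hsubst : ∀ P : MvPoly2, (L ^ m * P).IsHomogeneous e →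
      aeval ![L ^ k * a, L ^ k * b] (L ^ m * P) = L ^ (e * k + m) * (t ^ m * aeval ![a, b] P) := by
    intro P hP
    rw [show ![L ^ k * a, L ^ k * b] = L ^ k • ![a, b] by simp, hP.aeval_smul, map_mul, map_pow,
      hab]
    ring
  refine ⟨_, _, Prod.ext (hsubst p hg1) (hsubst q hg2), ?_⟩
  have hfix : aeval ![t ^ m * aeval ![a, b] p, t ^ m * aeval ![a, b] q] L
      = t ^ m * aeval ![a, b] (aeval ![p, q] L) := by
    simp only [L, aeval_linForm, map_sub, map_mul, aeval_C, algebraMap_eq]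
    ring
  rw [hfix]
  exact ((Dvd.intro t hab.symm).trans (map_dvd _ hpq)).mul_left _

lemma FixesHole.iter {v : ℂ × ℂ} {e m : ℕ} {g : Pair} (hg1 : g.1.IsHomogeneous e)
    (hg2 : g.2.IsHomogeneous e) (hg : FixesHole v m g) (he : 2 * m + 1 = e) (j : ℕ) :
    ∃ k, 2 * k + 1 = e ^ j ∧ FixesHole v k (iter g j) := by
  induction j with
  | zero => exact ⟨0, rfl, fixesHole_idPair v⟩
  | succ j ih =>
    obtain ⟨k, hk, hkj⟩ := ih
    refine ⟨e * k + m, ?_, hg.comp hg1 hg2 hkj⟩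
    rw [pow_succ, ← hk, ← he]
    ring

lemma FixesHole.le_depth {v : ℂ × ℂ} (hv : v ≠ 0) {m : ℕ} {g : Pair} (hg0 : g ≠ 0)
    (hg : FixesHole v m g) : m ≤ depth v g := by
  obtain ⟨p, q, rfl, -⟩ := hg
  exact le_depth_of_pow_dvd hv hg0 (dvd_mul_right _ _) (dvd_mul_right _ _)

lemma FixedHole.fixesHole {v : ℂ × ℂ} (hv : v ≠ 0) {g : Pair} (hg0 : g ≠ 0)
    (hfix : FixedHole v g) : FixesHole v (depth v g) g := by
  obtain ⟨⟨p, hp⟩, ⟨q, hq⟩⟩ := pow_depth_dvd hv hg0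
  set m := depth v g
  set L := linForm v
  have hpq : L ∣ X 0 * q - X 1 * p := by
    have hff := pow_succ_dvd_of_lt_ord hfix
    rw [fixedForm, hp, hq, show X 0 * (L ^ m * q) - X 1 * (L ^ m * p)
      = L ^ m * (X 0 * q - X 1 * p) by ring, pow_succ] at hff
    exact (mul_dvd_mul_iff_left (pow_ne_zero m (linForm_ne_zero hv))).mp hff
  refine ⟨p, q, Prod.ext hp hq, ?_⟩
  rw [aeval_linForm]
  apply linForm_dvd_of_dvd_X_mul hv
  · rw [show X 0 * (C v.2 * p - C v.1 * q) = L * p - C v.1 * (X 0 * q - X 1 * p) by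
      simp only [L, linForm]; ring]
    exact dvd_sub (dvd_mul_right _ _) (hpq.mul_left _)
  · rw [show X 1 * (C v.2 * p - C v.1 * q) = L * q - C v.2 * (X 0 * q - X 1 * p) by
      simp only [L, linForm]; ring]
    exact dvd_sub (dvd_mul_right _ _) (hpq.mul_left _)

lemma semistable_iff_of_odd {e : ℕ} (he : Odd e) (g : Pair) :
    Semistable e g ↔ StableAt ((e + 1) / 2) g := by
  rw [Semistable, if_neg (by simp [Nat.odd_iff.mp he])]

lemma stable_iff_of_odd {e : ℕ} (he : Odd e) (g : Pair) :
    Stable e g ↔ StableAt ((e - 1) / 2) g := by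
  rw [Stable, if_neg (by simp [Nat.odd_iff.mp he])]

lemma exists_mul_pow_lt_half_pred {c x : ℝ} (hc : c < 1 / 2) (hx : 1 < x) :
    ∃ j : ℕ, 1 ≤ j ∧ c * x ^ j < (x ^ j - 1) / 2 := by
  obtain ⟨N, hN⟩ := pow_unbounded_of_one_lt (1 / (1 - 2 * c)) hx
  have hxN : 1 < (1 - 2 * c) * x ^ (N + 1) := by
    rw [div_lt_iff₀' (by linarith)] at hN
    have := mul_le_mul_of_nonneg_left (pow_le_pow_right₀ hx.le (by omega : N ≤ N + 1))
      (by linarith : 0 ≤ 1 - 2 * c)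
    linarith
  exact ⟨N + 1, by omega, by linarith⟩

lemma two_mul_depth_le_of_semistable_comp_self {e : ℕ} (he : Odd e) (he1 : 1 < e) {g : Pair}
    (hg1 : g.1.IsHomogeneous e) (hg2 : g.2.IsHomogeneous e) (hg0 : g ≠ 0)
    (hgg : Semistable (e * e) (comp g g)) {v : ℂ × ℂ} (hv : v ≠ 0) :
    2 * depth v g ≤ e - 1 := by
  rw [semistable_iff_of_odd (he.mul he)] at hgg
  have hlow := mul_depth_le_depth_comp hv hg1 hg2 hg0 hgg.1
  have hup := (Nat.le_div_iff_mul_le two_pos).mp (hlow.trans (hgg.2 v hv).1)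
  obtain ⟨r, rfl⟩ := he
  by_contra! h
  have hm : r + 1 ≤ depth v g := by omega
  nlinarith [Nat.mul_le_mul_left (2 * r + 1) hm]

lemma semistable_of_two_mul_depth_le {e : ℕ} (he : Odd e) {g : Pair} (hg0 : g ≠ 0)
    (h : ∀ v : ℂ × ℂ, v ≠ 0 → 2 * depth v g ≤ e - 1) : Semistable e g := by
  rw [semistable_iff_of_odd he]
  refine ⟨hg0, fun v hv => ⟨?_, fun _ hm => ?_⟩⟩ <;> have := h v hv <;> omega

lemma stable_of_depth_iter_le {e : ℕ} (he : Odd e) (he1 : 1 < e) {g : Pair}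
    (hg1 : g.1.IsHomogeneous e) (hg2 : g.2.IsHomogeneous e) (hne : ∀ j, iter g j ≠ 0)
    (h : ∀ v : ℂ × ℂ, v ≠ 0 → ∃ c : ℝ, c < 1 / 2 ∧
      ∀ j : ℕ, 1 ≤ j → (depth v (iter g j) : ℝ) ≤ c * (e : ℝ) ^ j) : Stable e g := by
  have hg0 : g ≠ 0 := iter_one g ▸ hne 1
  rw [stable_iff_of_odd he]
  refine ⟨hg0, fun v hv => ?_⟩
  obtain ⟨c, hc, hbound⟩ := h v hv
  have hlt : 2 * depth v g < e := by
    have h1 := hbound 1 le_rfl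
    rw [iter_one, pow_one] at h1
    have he0 : (0 : ℝ) < e := Nat.cast_pos.mpr (by omega)
    have : (2 * depth v g : ℝ) < e := by nlinarith
    exact_mod_cast this
  refine ⟨by omega, fun _ hm hfix => ?_⟩
  have he2 := Nat.odd_iff.mp he
  obtain ⟨j, hj, hcj⟩ := exists_mul_pow_lt_half_pred hc (Nat.one_lt_cast.mpr he1)
  obtain ⟨k, hk, hkj⟩ := (hfix.fixesHole hv hg0).iter hg1 hg2 (by omega) j
  have hkd : (k : ℝ) ≤ c * (e : ℝ) ^ j :=
    (Nat.cast_le.mpr (hkj.le_depth hv (hne j))).trans (hbound j hj)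
  have hk' : ((e : ℝ) ^ j) = 2 * k + 1 := by exact_mod_cast hk.symm
  rw [hk'] at hcj hkd
  linarith

/-- For `d ≥ 3` odd and a degree-`d` pair `f ∉ I(d)`, all iterates `f^n` are nonzero;
(i) every iterate `f^n` is semistable iff every hole of every `f^n` has depth at most
`(d^n - 1)/2`; (ii) if for every point the supremum of `depth/(d^n)` over all iterates
is strictly below `1/2`, then every iterate `f^n` is stable. -/
theorem odd_degree_iterates_semistable_iff (d : ℕ) (hd : 3 ≤ d) (hodd : Odd d)
    (f : Pair) (hf : IsDegPair d f) (hI : ¬ IsIndet f) :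
    (∀ n : ℕ, 1 ≤ n → iter f n ≠ 0) ∧
    ((∀ n : ℕ, 1 ≤ n → Semistable (d ^ n) (iter f n)) ↔
      ∀ n : ℕ, 1 ≤ n → ∀ v : ℂ × ℂ, v ≠ 0 → 2 * depth v (iter f n) ≤ d ^ n - 1) ∧
    ((∀ v : ℂ × ℂ, v ≠ 0 → ∃ c : ℝ, c < 1 / 2 ∧
        ∀ n : ℕ, 1 ≤ n → (depth v (iter f n) : ℝ) ≤ c * (d : ℝ) ^ n) →
      ∀ n : ℕ, 1 ≤ n → Stable (d ^ n) (iter f n)) := by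
  obtain ⟨hf1, hf2, -⟩ := hf
  have hne : ∀ n, iter f n ≠ 0 := iter_ne_zero hf1 hf2 hI
  have hhom := isHomogeneous_iter hf1 hf2
  have hpow : ∀ n, 1 ≤ n → 1 < d ^ n := fun n hn => Nat.one_lt_pow (by omega) (by omega)
  refine ⟨fun n _ => hne n, ⟨fun hss n hn v hv => ?_, fun h n hn => ?_⟩, fun h n hn => ?_⟩
  · refine two_mul_depth_le_of_semistable_comp_self hodd.pow (hpow n hn) (hhom n).1 (hhom n).2
      (hne n) ?_ hv
    rw [← iter_add, ← pow_add]
    exact hss (n + n) (by omega)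
  · exact semistable_of_two_mul_depth_le hodd.pow (hne n) (h n hn)
  · refine stable_of_depth_iter_le hodd.pow (hpow n hn) (hhom n).1 (hhom n).2
      (fun j => iter_mul f n j ▸ hne _) fun v hv => ?_
    obtain ⟨c, hc, hbound⟩ := h v hv
    refine ⟨c, hc, fun j hj => ?_⟩
    rw [← iter_mul, Nat.cast_pow, ← pow_mul]
    exact hbound _ (Nat.one_le_iff_ne_zero.mpr (by positivity))
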